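/- arXiv:2601.06629 — 5 statements merged into one kernel-verified Lean document; each statement's English description precedes it below -/
import Mathlib

section
/- Let X₁,…,Xₙ be i.i.d. with CDF F and empirical CDF Fₙ, and let μ be any probability measure on ℝ. Then E[∫|F − Fₙ| dμ] ≤ √(π/(2n)), and consequently there exists a realization of X₁,…,Xₙ for which ∫|F − Fₙ| dμ ≤ √(π/(2n)). -/
open MeasureTheory ProbabilityTheory Real

/-!
For fixed `x`, `n Fₙ(x)` is a sum of `n` independent indicators with mean `F(x)`, so `Fₙ(x)` has
mean `F(x)` and variance at most `1/(4n)` (Popoviciu). By Cauchy–Schwarz,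
`E|F(x) − Fₙ(x)| ≤ 1/(2√n) ≤ √(π/(2n))`. Integrating over `x` against `μ` and swapping the
integrals (Fubini) gives the bound on the expectation, and a random variable is somewhere at most
its mean.
-/

section Probability

variable {Ω : Type*} {mΩ : MeasurableSpace Ω} {P : Measure Ω} [IsProbabilityMeasure P]

lemma integral_abs_sub_integral_le_sqrt_variance {Y : Ω → ℝ} (hY : MemLp Y 2 P) :
    ∫ ω, |Y ω - P[Y]| ∂P ≤ √(Var[Y; P]) := by
  set W : Ω → ℝ := fun ω ↦ |Y ω - P[Y]|
  have hW : MemLp W 2 P := (hY.sub (memLp_const _)).abs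
  have hW_sq : P[W ^ 2] = Var[Y; P] := by
    simp [W, variance_eq_integral hY.aemeasurable, sq_abs]
  have h := variance_nonneg W P
  rw [variance_eq_sub hW, hW_sq] at h
  exact le_sqrt_of_sq_le (by linarith)

lemma variance_mean_le_of_mem_Icc {ι : Type*} [Fintype ι] {Y : ι → Ω → ℝ} {a b : ℝ}
    (hY : ∀ i, AEMeasurable (Y i) P) (hab : ∀ i, ∀ᵐ ω ∂P, Y i ω ∈ Set.Icc a b)
    (hindep : Pairwise fun i j ↦ Y i ⟂ᵢ[P] Y j) :
    Var[fun ω ↦ (∑ i, Y i ω) / Fintype.card ι; P] ≤ ((b - a) / 2) ^ 2 / Fintype.card ι := by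
  set c : ℝ := (Fintype.card ι : ℝ)
  have hY_sq (i : ι) : MemLp (Y i) 2 P := memLp_of_bounded (hab i) (hY i).aestronglyMeasurable 2
  have hsum : Var[∑ i, Y i; P] ≤ c * ((b - a) / 2) ^ 2 := by
    rw [IndepFun.variance_sum (fun i _ ↦ hY_sq i) fun i _ j _ hij ↦ hindep hij]
    exact (Finset.sum_le_sum fun i _ ↦ variance_le_sq_of_bounded (hab i) (hY i)).trans_eq
      (by simp [c])
  have hmean : (fun ω ↦ (∑ i, Y i ω) / c) = fun ω ↦ c⁻¹ * (∑ i, Y i) ω := by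
    ext ω; simp [div_eq_inv_mul]
  rw [hmean, variance_const_mul]
  calc c⁻¹ ^ 2 * Var[∑ i, Y i; P] ≤ c⁻¹ ^ 2 * (c * ((b - a) / 2) ^ 2) := by gcongr
    _ = ((b - a) / 2) ^ 2 / c := by
      rcases eq_or_ne c 0 with hc | hc
      · simp [hc]
      · field_simp

end Probability

lemma integral_integral_le_of_forall_integral_le {α β : Type*} {mα : MeasurableSpace α}
    {mβ : MeasurableSpace β} {P : Measure α} [SFinite P] {μ : Measure β} [IsProbabilityMeasure μ]
    {f : α → β → ℝ} (hf : Integrable (Function.uncurry f) (P.prod μ)) {c : ℝ}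
    (h : ∀ y, ∫ x, f x y ∂P ≤ c) :
    ∫ x, ∫ y, f x y ∂μ ∂P ≤ c := by
  rw [integral_integral_swap hf]
  simpa using integral_mono hf.integral_prod_right (integrable_const c) h

noncomputable def empiricalCDF {Ω : Type*} {n : ℕ} (X : Fin n → Ω → ℝ) (ω : Ω) (x : ℝ) : ℝ :=
  (∑ i, if X i ω ≤ x then (1 : ℝ) else 0) / n

section EmpiricalCDF

variable {Ω : Type*} {mΩ : MeasurableSpace Ω} {P : Measure Ω} {n : ℕ} {X : Fin n → Ω → ℝ}

lemma empiricalCDF_mem_Icc (ω : Ω) (x : ℝ) : empiricalCDF X ω x ∈ Set.Icc 0 1 := by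
  have hle : ∑ i, (if X i ω ≤ x then (1 : ℝ) else 0) ≤ n := by
    simpa using Finset.sum_le_sum fun i (_ : i ∈ Finset.univ) ↦
      (show (if X i ω ≤ x then (1 : ℝ) else 0) ≤ 1 by split_ifs <;> norm_num)
  exact ⟨by unfold empiricalCDF; positivity, div_le_one_of_le₀ hle n.cast_nonneg⟩

lemma measurable_uncurry_empiricalCDF (hX : ∀ i, Measurable (X i)) :
    Measurable (Function.uncurry (empiricalCDF X)) :=
  (Finset.measurable_sum _ fun i _ ↦ Measurable.ite
    (measurableSet_le ((hX i).comp measurable_fst) measurable_snd)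
    measurable_const measurable_const).div_const _

lemma integral_ite_le_eq_cdf_map [IsProbabilityMeasure P] {Y : Ω → ℝ} (hY : Measurable Y)
    (x : ℝ) : ∫ ω, (if Y ω ≤ x then (1 : ℝ) else 0) ∂P = cdf (P.map Y) x := by
  have : IsProbabilityMeasure (P.map Y) := Measure.isProbabilityMeasure_map hY.aemeasurable
  rw [cdf_eq_real, map_measureReal_apply hY measurableSet_Iic, ← integral_indicator_one
    (hY measurableSet_Iic)]
  rfl

variable [IsProbabilityMeasure P] (hX : ∀ i, Measurable (X i))
include hX

lemma integral_empiricalCDF (hn : 0 < n) {ν : Measure ℝ} (hid : ∀ i, P.map (X i) = ν) (x : ℝ) :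
    P[fun ω ↦ empiricalCDF X ω x] = cdf ν x := by
  have hint (i : Fin n) : Integrable (fun ω ↦ if X i ω ≤ x then (1 : ℝ) else 0) P :=
    .of_bound (Measurable.ite (hX i measurableSet_Iic) measurable_const
      measurable_const).aestronglyMeasurable 1 (ae_of_all _ fun ω ↦ by split_ifs <;> simp)
  unfold empiricalCDF
  rw [integral_div, integral_finsetSum _ fun i _ ↦ hint i]
  simp_rw [integral_ite_le_eq_cdf_map (hX _), hid]
  simp [hn.ne']

lemma variance_empiricalCDF_le (hindep : iIndepFun X P) (x : ℝ) :
    Var[fun ω ↦ empiricalCDF X ω x; P] ≤ 1 / (4 * n) := by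
  have hmeas : Measurable fun t : ℝ ↦ if t ≤ x then (1 : ℝ) else 0 :=
    Measurable.ite measurableSet_Iic measurable_const measurable_const
  have h := variance_mean_le_of_mem_Icc (P := P) (a := 0) (b := 1)
    (Y := fun i ω ↦ if X i ω ≤ x then (1 : ℝ) else 0)
    (fun i ↦ (hmeas.comp (hX i)).aemeasurable)
    (fun i ↦ ae_of_all _ fun ω ↦ by split_ifs <;> simp)
    (fun i j hij ↦ (hindep.indepFun hij).comp hmeas hmeas)
  rw [Fintype.card_fin] at h
  exact h.trans_eq (by ring)

lemma integral_abs_cdf_sub_empiricalCDF_le (hn : 0 < n) {ν : Measure ℝ}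
    (hid : ∀ i, P.map (X i) = ν) (hindep : iIndepFun X P) (x : ℝ) :
    ∫ ω, |cdf ν x - empiricalCDF X ω x| ∂P ≤ √(1 / (4 * n)) := by
  have hmem : MemLp (fun ω ↦ empiricalCDF X ω x) 2 P :=
    memLp_of_bounded (ae_of_all _ fun ω ↦ empiricalCDF_mem_Icc ω x)
      (measurable_uncurry_empiricalCDF hX).of_uncurry_right.aestronglyMeasurable 2
  calc ∫ ω, |cdf ν x - empiricalCDF X ω x| ∂P
      = ∫ ω, |empiricalCDF X ω x - P[fun ω ↦ empiricalCDF X ω x]| ∂P := by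
        simp_rw [integral_empiricalCDF hX hn hid x, abs_sub_comm]
    _ ≤ √(Var[fun ω ↦ empiricalCDF X ω x; P]) := integral_abs_sub_integral_le_sqrt_variance hmem
    _ ≤ √(1 / (4 * n)) := sqrt_le_sqrt (variance_empiricalCDF_le hX hindep x)

lemma integrable_abs_cdf_sub_empiricalCDF (ν : Measure ℝ) {μ : Measure ℝ} [IsFiniteMeasure μ] :
    Integrable (Function.uncurry fun ω x ↦ |cdf ν x - empiricalCDF X ω x|) (P.prod μ) := by
  refine .of_bound (((cdf ν).mono.measurable.comp measurable_snd).sub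
    (measurable_uncurry_empiricalCDF hX)).abs.aestronglyMeasurable 1 (ae_of_all _ fun p ↦ ?_)
  obtain ⟨ω, x⟩ := p
  obtain ⟨h0, h1⟩ := empiricalCDF_mem_Icc (X := X) ω x
  have := cdf_nonneg ν x
  have := cdf_le_one ν x
  rw [Function.uncurry_apply_pair, Real.norm_eq_abs, abs_abs, abs_sub_le_iff]
  constructor <;> linarith

end EmpiricalCDF

/-- For `X₁,…,Xₙ` i.i.d. with CDF `F`, empirical CDF `Fₙ`, and any probability measure `μ`,
`E[∫ |F − Fₙ| dμ] ≤ √(π/(2n))`, and consequently some realization satisfies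
`∫ |F − Fₙ| dμ ≤ √(π/(2n))`. -/
theorem expected_L1_deviation_le_and_exists
    {Ω : Type*} [MeasureSpace Ω] [IsProbabilityMeasure (ℙ : Measure Ω)]
    (n : ℕ) (hn : 0 < n)
    (X : Fin n → Ω → ℝ)
    (hmeas : ∀ i, Measurable (X i))
    (ν : Measure ℝ) [IsProbabilityMeasure ν]
    (hid : ∀ i, Measure.map (X i) ℙ = ν)
    (hindep : iIndepFun X ℙ)
    (F : ℝ → ℝ) (hF : ∀ x, F x = (ν (Set.Iic x)).toReal)
    (μ : Measure ℝ) [IsProbabilityMeasure μ] :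
    (∫ ω, (∫ x, |F x - (∑ i, if X i ω ≤ x then (1 : ℝ) else 0) / n| ∂μ) ∂ℙ)
        ≤ Real.sqrt (π / (2 * n))
    ∧ ∃ ω : Ω, (∫ x, |F x - (∑ i, if X i ω ≤ x then (1 : ℝ) else 0) / n| ∂μ)
        ≤ Real.sqrt (π / (2 * n)) := by
  obtain rfl : F = cdf ν := funext fun x ↦ (hF x).trans (cdf_eq_real ν x).symm
  have hint := integrable_abs_cdf_sub_empiricalCDF hmeas ν (P := ℙ) (μ := μ)
  have hmean : ∫ ω, ∫ x, |cdf ν x - empiricalCDF X ω x| ∂μ ∂ℙ ≤ √(π / (2 * n)) :=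
    integral_integral_le_of_forall_integral_le hint fun x ↦
      (integral_abs_cdf_sub_empiricalCDF_le hmeas hn hid hindep x).trans
        (sqrt_le_sqrt (by gcongr <;> linarith [pi_gt_three]))
  exact ⟨hmean, (exists_le_integral hint.integral_prod_left).imp fun ω hω ↦ hω.trans hmean⟩
end

section
/- Let I ⊆ ℝ be a finite interval, J ⊆ I measurable with μ(J) > 0, where dμ = f dq for a density f with 0 < c ≤ f(q) ≤ C on I. Suppose F : I → ℝ satisfies c|q − q₀| ≤ |F(q) − F(q₀)| ≤ C|q − q₀| for some q₀ ∈ I and all q ∈ I. Then m = ∫_J |F(q) − F(q₀)| dμ ≥ (c²/(4C²))·μ(J)², and s = ∫_J |F(q) − F(q₀)|² dμ ≤ (C³/(3c³))·μ(I)³. -/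
/-! On sets of Lebesgue measure `2t`, `∫_J |q - q₀|` is smallest for `J = [q₀ - t, q₀ + t]`:
the function `𝟙_[q₀-t, q₀+t] (|q - q₀| - t)` is nonpositive and lies below `|q - q₀| - t`, whence
`∫_J |q - q₀| ≥ t |J| - t²`, and `t = |J| / 2` gives `|J|² / 4`. Together with
`c² |q - q₀| ≤ |F q - F q₀| f q` and `μ(J) ≤ C |J|` this is the first bound. For the second, the
integrand is at most `C³ (q - q₀)²`, whose integral over `[a, b]` is largest when `q₀` is an
endpoint, where it equals `C³ (b - a)³ / 3`; finally `c (b - a) ≤ μ(I)`. -/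

open MeasureTheory Set

lemma integral_abs_neg_self {t : ℝ} (ht : 0 ≤ t) : ∫ x in -t..t, |x| = t ^ 2 := by
  have h_pos : ∫ x in (0 : ℝ)..t, |x| = t ^ 2 / 2 := by
    rw [intervalIntegral.integral_congr fun x hx => abs_of_nonneg (uIcc_of_le ht ▸ hx).1,
      integral_id]
    ring
  have h_neg : ∫ x in -t..0, |x| = t ^ 2 / 2 := by
    have := intervalIntegral.integral_comp_neg (a := 0) (b := t) (|·|)
    simp only [abs_neg, neg_zero] at this
    rw [← this, h_pos]
  rw [← intervalIntegral.integral_add_adjacent_intervals (b := 0)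
    (continuous_abs.intervalIntegrable _ _) (continuous_abs.intervalIntegrable _ _), h_neg, h_pos]
  ring

lemma mul_volume_real_sub_sq_le_setIntegral_abs_sub {J : Set ℝ} (hJfin : volume J ≠ ⊤) (q₀ : ℝ)
    (hint : IntegrableOn (fun q => |q - q₀|) J) {t : ℝ} (ht : 0 ≤ t) :
    t * volume.real J - t ^ 2 ≤ ∫ q in J, |q - q₀| := by
  set B := Icc (q₀ - t) (q₀ + t)
  set φ := B.indicator fun q => |q - q₀| - t
  have hφ_nonpos : ∀ q, φ q ≤ 0 := by
    refine indicator_nonpos fun q hq => ?_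
    have : |q - q₀| ≤ t := abs_sub_le_iff.2 ⟨by linarith [hq.2], by linarith [hq.1]⟩
    linarith
  have hφ_le : ∀ q, φ q ≤ |q - q₀| - t := by
    refine fun q => indicator_le_self' (fun q hq => ?_) q
    simp only [B, mem_Icc, not_and_or, not_le] at hq
    refine sub_nonneg.2 (le_abs.2 ?_)
    rcases hq with hq | hq
    · right; linarith
    · left; linarith
  have hφ_int : Integrable φ :=
    (((continuous_abs.comp (continuous_sub_right q₀)).sub continuous_const).integrableOn_Icc
      ).integrable_indicator measurableSet_Icc
  have hB : ∫ q in B, (|q - q₀| - t) = -t ^ 2 := by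
    rw [integral_Icc_eq_integral_Ioc, ← intervalIntegral.integral_of_le (by linarith),
      intervalIntegral.integral_comp_sub_right (fun x => |x| - t) q₀, sub_sub_cancel_left,
      add_sub_cancel_left, intervalIntegral.integral_sub (continuous_abs.intervalIntegrable _ _)
      intervalIntegrable_const, integral_abs_neg_self ht, intervalIntegral.integral_const,
      smul_eq_mul]
    ring
  calc t * volume.real J - t ^ 2 = t * volume.real J + ∫ q, φ q := by
        rw [integral_indicator measurableSet_Icc, hB]; ring
    _ ≤ t * volume.real J + ∫ q in J, φ q := by
        have := setIntegral_le_integral (s := J) hφ_int.neg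
          (ae_of_all _ fun q => neg_nonneg.2 (hφ_nonpos q))
        simp only [Pi.neg_apply, integral_neg] at this
        linarith
    _ ≤ t * volume.real J + ∫ q in J, (|q - q₀| - t) :=
        add_le_add le_rfl
          (setIntegral_mono hφ_int.integrableOn (hint.sub (integrableOn_const hJfin)) hφ_le)
    _ = ∫ q in J, |q - q₀| := by
        rw [integral_sub hint (integrableOn_const hJfin), setIntegral_const, smul_eq_mul]; ring

lemma sq_volume_real_div_four_le_setIntegral_abs_sub {J : Set ℝ} (hJfin : volume J ≠ ⊤)
    (q₀ : ℝ) (hint : IntegrableOn (fun q => |q - q₀|) J) :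
    volume.real J ^ 2 / 4 ≤ ∫ q in J, |q - q₀| := by
  convert mul_volume_real_sub_sq_le_setIntegral_abs_sub hJfin q₀ hint
    (div_nonneg measureReal_nonneg zero_le_two) using 1
  ring

lemma setIntegral_Icc_sq_sub_le {a b q₀ : ℝ} (hq₀ : q₀ ∈ Icc a b) :
    ∫ q in Icc a b, (q - q₀) ^ 2 ≤ (b - a) ^ 3 / 3 := by
  obtain ⟨ha, hb⟩ := hq₀
  rw [integral_Icc_eq_integral_Ioc, ← intervalIntegral.integral_of_le (ha.trans hb),
    intervalIntegral.integral_comp_sub_right (fun x => x ^ 2) q₀, integral_pow]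
  nlinarith [mul_nonneg (mul_nonneg (sub_nonneg.2 ha) (sub_nonneg.2 hb))
    (sub_nonneg.2 (ha.trans hb))]

lemma pow_abs_mul_le {x y w C : ℝ} (hxy : |x| ≤ C * |y|) (hw : 0 ≤ w) (hwC : w ≤ C) (n : ℕ) :
    |x| ^ n * w ≤ (C * |y|) ^ n * C :=
  mul_le_mul (pow_le_pow_left₀ (abs_nonneg x) hxy n) hwC hw
    (pow_nonneg ((abs_nonneg x).trans hxy) n)

section BiLipschitz

variable {a b c C q₀ : ℝ} {J : Set ℝ} {f F : ℝ → ℝ}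

lemma integrableOn_Icc_abs_sub_pow_mul (hf : Measurable f) (hF : Measurable F)
    (hf₀ : ∀ q ∈ Icc a b, 0 ≤ f q) (hfC : ∀ q ∈ Icc a b, f q ≤ C)
    (hup : ∀ q ∈ Icc a b, |F q - F q₀| ≤ C * |q - q₀|) (n : ℕ) :
    IntegrableOn (fun q => |F q - F q₀| ^ n * f q) (Icc a b) := by
  refine Integrable.mono' (g := fun q => (C * |q - q₀|) ^ n * C)
    (by fun_prop : Continuous fun q : ℝ => (C * |q - q₀|) ^ n * C).integrableOn_Icc
    (by fun_prop : Measurable fun q => |F q - F q₀| ^ n * f q).aestronglyMeasurable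
    ((ae_restrict_iff' measurableSet_Icc).2 (ae_of_all _ fun q hq => ?_))
  rw [Real.norm_of_nonneg (mul_nonneg (pow_nonneg (abs_nonneg _) n) (hf₀ q hq))]
  exact pow_abs_mul_le (hup q hq) (hf₀ q hq) (hfC q hq) n

lemma div_mul_sq_setIntegral_le_setIntegral_abs_sub_mul (hJ : MeasurableSet J)
    (hJI : J ⊆ Icc a b) (hf : Measurable f) (hF : Measurable F) (hc : 0 ≤ c)
    (hfc : ∀ q ∈ Icc a b, c ≤ f q) (hfC : ∀ q ∈ Icc a b, f q ≤ C)
    (hlow : ∀ q ∈ Icc a b, c * |q - q₀| ≤ |F q - F q₀|)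
    (hup : ∀ q ∈ Icc a b, |F q - F q₀| ≤ C * |q - q₀|) :
    c ^ 2 / (4 * C ^ 2) * (∫ q in J, f q) ^ 2 ≤ ∫ q in J, |F q - F q₀| * f q := by
  have hf₀ : ∀ q ∈ Icc a b, 0 ≤ f q := fun q hq => hc.trans (hfc q hq)
  have hJfin : volume J < ⊤ := (measure_mono hJI).trans_lt measure_Icc_lt_top
  have hmass : |∫ q in J, f q| ≤ C * volume.real J :=
    norm_setIntegral_le_of_norm_le_const hJfin fun q hq => by
      rw [Real.norm_of_nonneg (hf₀ q (hJI hq))]; exact hfC q (hJI hq)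
  have hdist_int : IntegrableOn (fun q => |q - q₀|) J :=
    (by fun_prop : Continuous fun q : ℝ => |q - q₀|).integrableOn_Icc.mono_set hJI
  have hdist := sq_volume_real_div_four_le_setIntegral_abs_sub hJfin.ne q₀ hdist_int
  have hmoment : IntegrableOn (fun q => |F q - F q₀| * f q) J := by
    simpa using (integrableOn_Icc_abs_sub_pow_mul hf hF hf₀ hfC hup 1).mono_set hJI
  calc c ^ 2 / (4 * C ^ 2) * (∫ q in J, f q) ^ 2
      ≤ c ^ 2 / (4 * C ^ 2) * (C * volume.real J) ^ 2 := by
        rw [← sq_abs (∫ q in J, f q)]; gcongr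
    -- `C ^ 2 / C ^ 2 ≤ 1` holds also for `C = 0`
    _ = c ^ 2 * (volume.real J ^ 2 / 4) * (C ^ 2 / C ^ 2) := by ring
    _ ≤ c ^ 2 * ∫ q in J, |q - q₀| := by
        grw [div_self_le_one, mul_one, hdist]
    _ = ∫ q in J, c ^ 2 * |q - q₀| := (integral_const_mul _ _).symm
    _ ≤ ∫ q in J, |F q - F q₀| * f q := by
        refine setIntegral_mono_on (hdist_int.const_mul _) hmoment hJ fun q hq => ?_
        calc c ^ 2 * |q - q₀| = c * |q - q₀| * c := by ring
          _ ≤ |F q - F q₀| * f q :=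
            mul_le_mul (hlow q (hJI hq)) (hfc q (hJI hq)) hc (abs_nonneg _)

lemma setIntegral_sq_abs_sub_mul_le_div_mul_pow_three (hJI : J ⊆ Icc a b) (hf : Measurable f)
    (hF : Measurable F) (hc : 0 < c) (hq₀ : q₀ ∈ Icc a b) (hfc : ∀ q ∈ Icc a b, c ≤ f q)
    (hfC : ∀ q ∈ Icc a b, f q ≤ C) (hup : ∀ q ∈ Icc a b, |F q - F q₀| ≤ C * |q - q₀|) :
    ∫ q in J, |F q - F q₀| ^ 2 * f q ≤ C ^ 3 / (3 * c ^ 3) * (∫ q in Icc a b, f q) ^ 3 := by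
  have hf₀ : ∀ q ∈ Icc a b, 0 ≤ f q := fun q hq => hc.le.trans (hfc q hq)
  have hC : 0 ≤ C := (hf₀ q₀ hq₀).trans (hfC q₀ hq₀)
  have hab : a ≤ b := hq₀.1.trans hq₀.2
  have hmoment := integrableOn_Icc_abs_sub_pow_mul hf hF hf₀ hfC hup 2
  have hmass : c * (b - a) ≤ ∫ q in Icc a b, f q := by
    rw [← Real.volume_real_Icc_of_le hab]
    exact setIntegral_ge_of_const_le_real measurableSet_Icc measure_Icc_lt_top.ne hfc
      (by simpa using integrableOn_Icc_abs_sub_pow_mul hf hF hf₀ hfC hup 0)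
  calc ∫ q in J, |F q - F q₀| ^ 2 * f q
      ≤ ∫ q in Icc a b, |F q - F q₀| ^ 2 * f q :=
        setIntegral_mono_set hmoment
          ((ae_restrict_iff' measurableSet_Icc).2 (ae_of_all _ fun q hq => by
            have := hf₀ q hq; positivity))
          hJI.eventuallyLE
    _ ≤ ∫ q in Icc a b, C ^ 3 * (q - q₀) ^ 2 := by
        refine setIntegral_mono_on hmoment
          (by fun_prop : Continuous fun q : ℝ => C ^ 3 * (q - q₀) ^ 2).integrableOn_Icc
          measurableSet_Icc fun q hq => ?_
        calc |F q - F q₀| ^ 2 * f q ≤ (C * |q - q₀|) ^ 2 * C :=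
              pow_abs_mul_le (hup q hq) (hf₀ q hq) (hfC q hq) 2
          _ = C ^ 3 * (q - q₀) ^ 2 := by rw [mul_pow, sq_abs]; ring
    _ = C ^ 3 * ∫ q in Icc a b, (q - q₀) ^ 2 := integral_const_mul _ _
    _ ≤ C ^ 3 * ((b - a) ^ 3 / 3) := by grw [setIntegral_Icc_sq_sub_le hq₀]
    _ = C ^ 3 / (3 * c ^ 3) * (c * (b - a)) ^ 3 := by field_simp
    _ ≤ C ^ 3 / (3 * c ^ 3) * (∫ q in Icc a b, f q) ^ 3 := by gcongr

end BiLipschitz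

theorem moment_bounds_bi_lipschitz_general
    (a b : ℝ)
    (J : Set ℝ) (hJmeas : MeasurableSet J) (hJI : J ⊆ Set.Icc a b)
    (f : ℝ → ℝ) (hfmeas : Measurable f)
    (c C : ℝ) (hc : 0 < c)
    (hfc : ∀ q ∈ Set.Icc a b, c ≤ f q) (hfC : ∀ q ∈ Set.Icc a b, f q ≤ C)
    (F : ℝ → ℝ) (hFmeas : Measurable F)
    (q₀ : ℝ) (hq₀ : q₀ ∈ Set.Icc a b)
    (hlow : ∀ q ∈ Set.Icc a b, c * |q - q₀| ≤ |F q - F q₀|)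
    (hup : ∀ q ∈ Set.Icc a b, |F q - F q₀| ≤ C * |q - q₀|) :
    (c ^ 2 / (4 * C ^ 2)) * (∫ q in J, f q) ^ 2 ≤ ∫ q in J, |F q - F q₀| * f q
    ∧ (∫ q in J, |F q - F q₀| ^ 2 * f q)
        ≤ (C ^ 3 / (3 * c ^ 3)) * (∫ q in Set.Icc a b, f q) ^ 3 :=
  ⟨div_mul_sq_setIntegral_le_setIntegral_abs_sub_mul hJmeas hJI hfmeas hFmeas hc.le hfc hfC hlow
      hup,
    setIntegral_sq_abs_sub_mul_le_div_mul_pow_three hJI hfmeas hFmeas hc hq₀ hfc hfC hup⟩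

/-- Moment bounds under a bi-Lipschitz condition: for a finite interval `I = [a,b]`,
a measurable `J ⊆ I` of positive mass under `dμ = f dq` with `0 < c ≤ f ≤ C` on `I`,
and `F` satisfying `c|q−q₀| ≤ |F q − F q₀| ≤ C|q−q₀|` on `I`, the first moment of
`|F − F q₀|` over `J` is at least `(c²/(4C²)) μ(J)²` and the second moment over `J`
is at most `(C³/(3c³)) μ(I)³`. -/
theorem moment_bounds_bi_lipschitz
    (a b : ℝ) (hab : a ≤ b)
    (J : Set ℝ) (hJmeas : MeasurableSet J) (hJI : J ⊆ Set.Icc a b)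
    (f : ℝ → ℝ) (hfmeas : Measurable f)
    (c C : ℝ) (hc : 0 < c)
    (hfc : ∀ q ∈ Set.Icc a b, c ≤ f q) (hfC : ∀ q ∈ Set.Icc a b, f q ≤ C)
    (hJpos : 0 < ∫ q in J, f q)
    (F : ℝ → ℝ) (hFmeas : Measurable F)
    (q₀ : ℝ) (hq₀ : q₀ ∈ Set.Icc a b)
    (hlow : ∀ q ∈ Set.Icc a b, c * |q - q₀| ≤ |F q - F q₀|)
    (hup : ∀ q ∈ Set.Icc a b, |F q - F q₀| ≤ C * |q - q₀|) :
    (c ^ 2 / (4 * C ^ 2)) * (∫ q in J, f q) ^ 2 ≤ ∫ q in J, |F q - F q₀| * f q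
    ∧ (∫ q in J, |F q - F q₀| ^ 2 * f q)
        ≤ (C ^ 3 / (3 * c ^ 3)) * (∫ q in Set.Icc a b, f q) ^ 3 :=
  moment_bounds_bi_lipschitz_general a b J hJmeas hJI f hfmeas c C hc hfc hfC F hFmeas q₀ hq₀ hlow
    hup
end

section
/- For any continuous strictly increasing CDF F with density f, the minimal L¹(F)-approximation error of F by piecewise constant functions with K pieces equals 1/(4K): inf over partitions {Iₖ} of the domain into K intervals and constants cₖ of ∑ₖ ∫_{Iₖ} |F(q) − cₖ| f(q) dq = 1/(4K). -/
/-!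
Since `f = F' ≥ 0`, the substitution `u = F q` turns the error of a partition `t` with constants
`c` into `∑ₖ ∫_{F tₖ}^{F tₖ₊₁} |u - cₖ| du`, a quantization problem for the uniform distribution
on `[0, 1]`. A cell of length `Δₖ` costs at least `Δₖ² / 4`, with equality at its midpoint, and
`∑ Δₖ = 1` forces `∑ Δₖ² ≥ 1 / K` by Cauchy–Schwarz. The quantiles `F tₖ = k / K` with
`cₖ = (2k + 1) / (2K)` attain the bound.
-/

open MeasureTheory Set intervalIntegral

theorem Fin.sum_succ_sub_castSucc {M : Type*} [AddCommGroup M] {n : ℕ} (g : Fin (n + 1) → M) :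
    ∑ k : Fin n, (g k.succ - g k.castSucc) = g (Fin.last n) - g 0 := by
  induction n with
  | zero => simp
  | succ n ih =>
    rw [Fin.sum_univ_castSucc]
    simp only [Fin.succ_castSucc]
    rw [ih (fun k => g k.castSucc)]
    simp

theorem integral_abs_sub_of_mem_Icc {α β c : ℝ} (hαc : α ≤ c) (hcβ : c ≤ β) :
    ∫ u in α..β, |u - c| = ((c - α) ^ 2 + (β - c) ^ 2) / 2 := by
  have hint : ∀ x y, IntervalIntegrable (fun u => |u - c|) volume x y := fun x y =>
    (by fun_prop : Continuous fun u => |u - c|).intervalIntegrable x y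
  have hleft : ∫ u in α..c, |u - c| = ∫ u in α..c, (c - u) := integral_congr fun u hu => by
    rw [uIcc_of_le hαc] at hu
    simp only [abs_sub_comm u c, abs_of_nonneg (sub_nonneg.2 hu.2)]
  have hright : ∫ u in c..β, |u - c| = ∫ u in c..β, (u - c) := integral_congr fun u hu => by
    rw [uIcc_of_le hcβ] at hu
    simp only [abs_of_nonneg (sub_nonneg.2 hu.1)]
  rw [← integral_add_adjacent_intervals (hint α c) (hint c β), hleft, hright,
    integral_comp_sub_left (fun x => x), integral_comp_sub_right (fun x => x)]
  simp only [sub_self, integral_id]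
  ring

theorem integral_abs_sub_midpoint {α β : ℝ} (h : α ≤ β) :
    ∫ u in α..β, |u - (α + β) / 2| = (β - α) ^ 2 / 4 := by
  rw [integral_abs_sub_of_mem_Icc (by linarith) (by linarith)]
  ring

theorem integral_abs_sub_midpoint_le {α β : ℝ} (h : α ≤ β) (c : ℝ) :
    ∫ u in α..β, |u - (α + β) / 2| ≤ ∫ u in α..β, |u - c| := by
  have hreflect : ∫ u in α..β, |α + β - u - c| = ∫ u in α..β, |u - c| := by
    rw [integral_comp_sub_left (fun x => |x - c|)]
    ring_nf
  have htriangle : ∫ u in α..β, 2 * |u - (α + β) / 2| ≤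
      ∫ u in α..β, (|u - c| + |α + β - u - c|) := by
    refine integral_mono_on h ((by fun_prop : Continuous _).intervalIntegrable _ _)
      ((by fun_prop : Continuous _).intervalIntegrable _ _) fun u _ => ?_
    calc 2 * |u - (α + β) / 2| = |(u - c) - (α + β - u - c)| := by
          rw [← abs_two, ← abs_mul]; ring_nf
      _ ≤ |u - c| + |α + β - u - c| := abs_sub _ _
  rw [intervalIntegral.integral_const_mul,
    integral_add ((by fun_prop : Continuous _).intervalIntegrable _ _)
      ((by fun_prop : Continuous _).intervalIntegrable _ _), hreflect] at htriangle
  linarith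

theorem sq_sub_div_four_le_integral_abs_sub {α β : ℝ} (h : α ≤ β) (c : ℝ) :
    (β - α) ^ 2 / 4 ≤ ∫ u in α..β, |u - c| :=
  integral_abs_sub_midpoint h ▸ integral_abs_sub_midpoint_le h c

theorem sum_integral_abs_sub_midpoint_uniform (K : ℕ) :
    ∑ k : Fin K, ∫ u in (k : ℝ) / K..(k + 1 : ℝ) / K, |u - (2 * k + 1) / (2 * K)| =
      1 / (4 * K) := by
  rcases K.eq_zero_or_pos with rfl | hK
  · simp
  have hK0 : (0 : ℝ) < K := by exact_mod_cast hK
  have hcell : ∀ k : Fin K,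
      ∫ u in (k : ℝ) / K..(k + 1 : ℝ) / K, |u - (2 * k + 1) / (2 * K)| = 1 / (4 * K ^ 2) :=
    fun k => by
      have hmid : (2 * k + 1) / (2 * K) = ((k : ℝ) / K + (k + 1) / K) / 2 := by
        field_simp; ring
      rw [hmid, integral_abs_sub_midpoint (by gcongr; linarith)]
      field_simp
      ring
  simp only [hcell, Finset.sum_const, Finset.card_univ, Fintype.card_fin, nsmul_eq_mul]
  field_simp

theorem one_div_four_mul_le_sum_integral_abs_sub {K : ℕ} {y : Fin (K + 1) → ℝ}
    (hy : Monotone y) (hy0 : y 0 = 0) (hyK : y (Fin.last K) = 1) (c : Fin K → ℝ) :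
    1 / (4 * K) ≤ ∑ k : Fin K, ∫ u in y k.castSucc..y k.succ, |u - c k| := by
  have hsum : ∑ k : Fin K, (y k.succ - y k.castSucc) = 1 := by
    rw [Fin.sum_succ_sub_castSucc, hy0, hyK, sub_zero]
  have hK : (0 : ℝ) < K := by
    rcases K.eq_zero_or_pos with rfl | hK
    · simp at hsum
    · exact_mod_cast hK
  calc (1 : ℝ) / (4 * K) ≤ ∑ k : Fin K, (y k.succ - y k.castSucc) ^ 2 / 4 := by
        have hcs := sq_sum_le_card_mul_sum_sq (s := Finset.univ)
          (f := fun k : Fin K => y k.succ - y k.castSucc)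
        rw [hsum, Finset.card_univ, Fintype.card_fin] at hcs
        rw [← Finset.sum_div, div_le_div_iff₀ (by positivity) (by norm_num)]
        linarith
    _ ≤ _ := Finset.sum_le_sum fun k _ =>
        sq_sub_div_four_le_integral_abs_sub (hy k.castSucc_le_succ) _

theorem StrictMonoOn.exists_monotone_comp_eq {ι : Type*} [Preorder ι] {F : ℝ → ℝ} {a b : ℝ}
    (hmono : StrictMonoOn F (Icc a b)) (hab : a ≤ b) (hF : ContinuousOn F (Icc a b))
    {y : ι → ℝ} (hy : Monotone y) (hyI : ∀ i, y i ∈ Icc (F a) (F b)) :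
    ∃ t : ι → ℝ, Monotone t ∧ (∀ i, t i ∈ Icc a b) ∧ ∀ i, F (t i) = y i := by
  choose t ht hFt using fun i => intermediate_value_Icc hab hF (hyI i)
  refine ⟨t, fun i j hij => (hmono.le_iff_le (ht i) (ht j)).1 ?_, ht, hFt⟩
  rw [hFt, hFt]
  exact hy hij

theorem StrictMonoOn.exists_quantile_partition {F : ℝ → ℝ} {a b : ℝ}
    (hmono : StrictMonoOn F (Icc a b)) (hab : a ≤ b) (hF : ContinuousOn F (Icc a b))
    (hFa : F a = 0) (hFb : F b = 1) {K : ℕ} (hK : K ≠ 0) :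
    ∃ t : Fin (K + 1) → ℝ, Monotone t ∧ t 0 = a ∧ t (Fin.last K) = b ∧
      ∀ k, F (t k) = k / K := by
  have hK0 : (0 : ℝ) < K := by positivity
  obtain ⟨t, ht, htI, hFt⟩ := hmono.exists_monotone_comp_eq hab hF
    (y := fun k : Fin (K + 1) => (k : ℝ) / K)
    (fun i j hij => div_le_div_of_nonneg_right (by exact_mod_cast hij) hK0.le)
    (fun k => by
      rw [hFa, hFb]
      exact ⟨by positivity, div_le_one_of_le₀ (by exact_mod_cast k.is_le) hK0.le⟩)
  refine ⟨t, ht, hmono.injOn (htI 0) (left_mem_Icc.2 hab) ?_,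
    hmono.injOn (htI _) (right_mem_Icc.2 hab) ?_, hFt⟩
  · simp [hFt, hFa]
  · simp [hFt, hFb, hK0.ne']

theorem setIntegral_Ioc_comp_mul_deriv_of_monotoneOn {F f g : ℝ → ℝ} {s t : ℝ} (hst : s ≤ t)
    (hF : ContinuousOn F (Icc s t)) (hmono : MonotoneOn F (Icc s t))
    (hderiv : ∀ x ∈ Ioo s t, HasDerivAt F (f x) x) :
    ∫ q in Ioc s t, g (F q) * f q = ∫ u in F s..F t, g u := by
  have hf : ∀ x ∈ Ioo s t, 0 ≤ f x := fun x hx => by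
    have h := (hmono.mono Ioo_subset_Icc_self).derivWithin_nonneg (x := x)
    rwa [derivWithin_of_isOpen isOpen_Ioo hx, (hderiv x hx).deriv] at h
  rw [← integral_of_le hst]
  exact integral_comp_mul_deriv_of_deriv_nonneg (by rwa [uIcc_of_le hst])
    (by simpa [hst] using hderiv) (by simpa [hst] using hf)

/-- For a continuous strictly increasing CDF `F` on `[a,b]` with density `f`, the
minimal `L¹(F)`-approximation error of `F` by piecewise constant functions with `K`
pieces equals `1/(4K)`:
`inf { ∑ₖ ∫_{Iₖ} |F − cₖ| f dq } = 1/(4K)`, the infimum over partitions `{Iₖ}` of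
`[a,b]` into `K` intervals and constants `cₖ`. -/
theorem min_piecewise_constant_approx_error
    (a b : ℝ) (hab : a < b)
    (F f : ℝ → ℝ)
    (hFcont : ContinuousOn F (Set.Icc a b))
    (hFmono : StrictMonoOn F (Set.Icc a b))
    (hFa : F a = 0) (hFb : F b = 1)
    (hderiv : ∀ x ∈ Set.Icc a b, HasDerivAt F (f x) x)
    (K : ℕ) (hK : 1 ≤ K) :
    sInf {e : ℝ | ∃ (t : Fin (K + 1) → ℝ) (c : Fin K → ℝ),
        Monotone t ∧ t 0 = a ∧ t (Fin.last K) = b ∧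
        e = ∑ k : Fin K, ∫ q in Set.Ioc (t k.castSucc) (t k.succ), |F q - c k| * f q}
      = 1 / (4 * K) := by
  have hpart : ∀ t : Fin (K + 1) → ℝ, Monotone t → t 0 = a → t (Fin.last K) = b →
      ∀ k, t k ∈ Icc a b := fun t ht ht0 htK k =>
    ⟨ht0 ▸ ht (Fin.zero_le k), htK ▸ ht (Fin.le_last k)⟩
  have hsubst : ∀ (t : Fin (K + 1) → ℝ) (c : Fin K → ℝ), Monotone t → t 0 = a →
      t (Fin.last K) = b → ∑ k : Fin K, ∫ q in Ioc (t k.castSucc) (t k.succ), |F q - c k| * f q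
        = ∑ k : Fin K, ∫ u in F (t k.castSucc)..F (t k.succ), |u - c k| := by
    intro t c ht ht0 htK
    refine Finset.sum_congr rfl fun k _ => ?_
    have hsub : Icc (t k.castSucc) (t k.succ) ⊆ Icc a b :=
      Icc_subset_Icc (hpart t ht ht0 htK _).1 (hpart t ht ht0 htK _).2
    exact setIntegral_Ioc_comp_mul_deriv_of_monotoneOn (g := fun u => |u - c k|)
      (ht k.castSucc_le_succ) (hFcont.mono hsub) (hFmono.monotoneOn.mono hsub)
      fun x hx => hderiv x (hsub (Ioo_subset_Icc_self hx))
  refine IsLeast.csInf_eq ⟨?_, ?_⟩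
  · obtain ⟨t, ht, ht0, htK, hFt⟩ := hFmono.exists_quantile_partition hab.le hFcont hFa hFb
      (Nat.one_le_iff_ne_zero.mp hK)
    refine ⟨t, fun k => (2 * k + 1) / (2 * K), ht, ht0, htK, ?_⟩
    rw [hsubst t _ ht ht0 htK, ← sum_integral_abs_sub_midpoint_uniform]
    simp [hFt]
  · rintro _ ⟨t, c, ht, ht0, htK, rfl⟩
    have htI := hpart t ht ht0 htK
    rw [hsubst t c ht ht0 htK]
    exact one_div_four_mul_le_sum_integral_abs_sub
      (fun i j hij => hFmono.monotoneOn (htI i) (htI j) (ht hij)) (by rw [ht0, hFa])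
      (by rw [htK, hFb]) c
end

section
/- Adversarial staircase CDF: for M ∈ ℕ define F_M on [0,1] piecewise by F_M(x) = (1/M)·[M(x − i/M)]² + i/M for x ∈ [i/M, (i+1)/M], i = 0,…,M−1. Then F_M is a continuous, increasing function with F_M(0) = 0 and F_M(1) = 1 (hence a valid CDF), and for any affine function L, ∫_{i/M}^{(i+1)/M} |F_M(x) − L(x)| dx ≥ 1/(16M²). -/
/-!
On `[i/M, (i+1)/M]` the substitution `u = M x - i` turns `F_M` into `(i + u²)/M` and an affine
function of `x` into an affine function of `u` divided by `M`, so the `L¹` error there is `1/M²`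
times the `L¹` distance on `[0,1]` from `u²` to an affine function. That distance is at least `1/16`:
against the sign pattern `+, -, +` on `[0,1/4], [1/4,3/4], [3/4,1]` every affine function integrates
to zero, while `u²` integrates to `1/16`.
-/

open MeasureTheory intervalIntegral

/-- The adversarial staircase function: on each interval `[i/M, (i+1)/M]` it equals
`(1/M)·[M(x − i/M)]² + i/M`, i.e. a rescaled copy of `x²`. -/
noncomputable def staircaseCDF (M : ℕ) (x : ℝ) : ℝ :=
  ((M : ℝ) * x - ⌊(M : ℝ) * x⌋) ^ 2 / M + (⌊(M : ℝ) * x⌋ : ℝ) / M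

open Set

lemma integral_sq_sub_affine (c d p q : ℝ) :
    ∫ u in p..q, (u ^ 2 - (c * u + d))
      = (q ^ 3 - p ^ 3) / 3 - c * (q ^ 2 - p ^ 2) / 2 - d * (q - p) := by
  rw [intervalIntegral.integral_sub (by simp) (by apply Continuous.intervalIntegrable; fun_prop),
    intervalIntegral.integral_add (by apply Continuous.intervalIntegrable; fun_prop) (by simp),
    intervalIntegral.integral_const_mul, integral_pow, integral_id, intervalIntegral.integral_const,
    smul_eq_mul]
  ring

lemma one_div_sixteen_le_integral_abs_sq_sub_affine (c d : ℝ) :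
    1 / 16 ≤ ∫ u in (0 : ℝ)..1, |u ^ 2 - (c * u + d)| := by
  set h : ℝ → ℝ := fun u => u ^ 2 - (c * u + d)
  have hint : ∀ p q : ℝ, IntervalIntegrable (fun u => |h u|) volume p q := fun p q => by
    apply Continuous.intervalIntegrable; fun_prop
  have hsplit : ∫ u in (0 : ℝ)..1, |h u| = (∫ u in (0 : ℝ)..(1 / 4), |h u|)
      + (∫ u in (1 / 4 : ℝ)..(3 / 4), |h u|) + ∫ u in (3 / 4 : ℝ)..1, |h u| := by
    rw [integral_add_adjacent_intervals (hint _ _) (hint _ _),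
      integral_add_adjacent_intervals (hint _ _) (hint _ _)]
  have hpiece : ∀ p q : ℝ, p ≤ q → |∫ u in p..q, h u| ≤ ∫ u in p..q, |h u| :=
    fun p q hpq => abs_integral_le_integral_abs hpq
  have h₁ := (le_abs_self _).trans (hpiece 0 (1 / 4) (by norm_num))
  have h₂ := (neg_le_abs _).trans (hpiece (1 / 4) (3 / 4) (by norm_num))
  have h₃ := (le_abs_self _).trans (hpiece (3 / 4) 1 (by norm_num))
  rw [hsplit]
  simp only [h, integral_sq_sub_affine] at h₁ h₂ h₃ ⊢
  linarith

noncomputable def unitStaircase (t : ℝ) : ℝ := ⌊t⌋ + Int.fract t ^ 2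

lemma staircaseCDF_eq_unitStaircase (M : ℕ) (x : ℝ) :
    staircaseCDF M x = unitStaircase (M * x) / M := by
  rw [staircaseCDF, unitStaircase, Int.fract]
  ring

lemma unitStaircase_of_mem_Icc (n : ℤ) {t : ℝ} (ht : t ∈ Icc (n : ℝ) (n + 1)) :
    unitStaircase t = n + (t - n) ^ 2 := by
  rcases ht.2.lt_or_eq with hlt | rfl
  · have hfloor : ⌊t⌋ = n := Int.floor_eq_iff.mpr ⟨ht.1, hlt⟩
    rw [unitStaircase, Int.fract, hfloor]
  · have hfloor : ⌊(n : ℝ) + 1⌋ = n + 1 := by exact_mod_cast Int.floor_intCast (n + 1)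
    rw [unitStaircase, Int.fract, hfloor]
    push_cast
    ring

lemma continuous_unitStaircase : Continuous unitStaircase := by
  have hfract : Continuous fun t : ℝ => Int.fract t ^ 2 - Int.fract t :=
    ContinuousOn.comp_fract'' (f := fun y : ℝ => y ^ 2 - y) (by fun_prop) (by norm_num)
  have hsplit : unitStaircase = fun t => t + (Int.fract t ^ 2 - Int.fract t) := by
    funext t
    rw [unitStaircase, Int.fract]
    ring
  rw [hsplit]
  exact continuous_id.add hfract

lemma monotone_unitStaircase : Monotone unitStaircase := by
  intro s t hst
  rcases (Int.floor_mono hst).lt_or_eq with hlt | hfloor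
  · have hstep : (⌊s⌋ : ℝ) + 1 ≤ ⌊t⌋ := by exact_mod_cast hlt
    have hs : Int.fract s ^ 2 ≤ 1 := pow_le_one₀ (Int.fract_nonneg s) (Int.fract_lt_one s).le
    rw [unitStaircase, unitStaircase]
    nlinarith [sq_nonneg (Int.fract t)]
  · have hfract : Int.fract s ≤ Int.fract t := by
      rw [Int.fract, Int.fract, hfloor]; linarith
    rw [unitStaircase, unitStaircase, hfloor]
    gcongr

lemma continuous_staircaseCDF (M : ℕ) : Continuous (staircaseCDF M) := by
  simp_rw [funext (staircaseCDF_eq_unitStaircase M)]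
  exact (continuous_unitStaircase.comp (continuous_const_mul _)).div_const _

lemma monotone_staircaseCDF (M : ℕ) : Monotone (staircaseCDF M) := by
  intro x y hxy
  rw [staircaseCDF_eq_unitStaircase, staircaseCDF_eq_unitStaircase]
  gcongr
  exact monotone_unitStaircase (by gcongr)

lemma staircaseCDF_zero (M : ℕ) : staircaseCDF M 0 = 0 := by
  simp [staircaseCDF]

lemma staircaseCDF_one {M : ℕ} (hM : 0 < M) : staircaseCDF M 1 = 1 := by
  have hM0 : (M : ℝ) ≠ 0 := by positivity
  have hstep := unitStaircase_of_mem_Icc M (t := M) ⟨le_rfl, by push_cast; linarith⟩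
  rw [staircaseCDF_eq_unitStaircase, mul_one, hstep]
  field_simp
  simp

lemma staircaseCDF_sub_affine_of_mem_Icc {M : ℕ} (hM : 0 < M) (i : ℤ) (a b : ℝ) {x : ℝ}
    (hx : x ∈ Icc ((i : ℝ) / M) ((i + 1) / M)) :
    staircaseCDF M x - (a * x + b)
      = ((M * x - i) ^ 2 - (a * (M * x - i) + (a * i + b * M - i))) / M := by
  have hM0 : (0 : ℝ) < M := by exact_mod_cast hM
  have hMx : M * x ∈ Icc (i : ℝ) (i + 1) := by
    constructor
    · have := hx.1; rwa [div_le_iff₀' hM0] at this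
    · have := hx.2; rwa [le_div_iff₀' hM0] at this
  rw [staircaseCDF_eq_unitStaircase, unitStaircase_of_mem_Icc i hMx]
  field_simp
  ring

lemma le_integral_abs_staircaseCDF_sub_affine {M : ℕ} (hM : 0 < M) (i : ℤ) (a b : ℝ) :
    1 / (16 * (M : ℝ) ^ 2)
      ≤ ∫ x in ((i : ℝ) / M)..((i + 1) / M), |staircaseCDF M x - (a * x + b)| := by
  have hM0 : (0 : ℝ) < M := by exact_mod_cast hM
  set d := a * i + b * M - i
  have hrescale : ∀ x ∈ uIcc ((i : ℝ) / M) ((i + 1) / M),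
      |staircaseCDF M x - (a * x + b)| = |(M * x - i) ^ 2 - (a * (M * x - i) + d)| / M := by
    intro x hx
    rw [uIcc_of_le (by gcongr; linarith)] at hx
    rw [staircaseCDF_sub_affine_of_mem_Icc hM i a b hx, abs_div, abs_of_pos hM0]
  have hlo : (M : ℝ) * (i / M) - i = 0 := by field_simp; ring
  have hhi : (M : ℝ) * ((i + 1) / M) - i = 1 := by field_simp; ring
  rw [integral_congr hrescale,
    integral_comp_mul_sub (fun u => |u ^ 2 - (a * u + d)| / M) hM0.ne', hlo, hhi, smul_eq_mul,
    intervalIntegral.integral_div]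
  calc 1 / (16 * (M : ℝ) ^ 2) = (M : ℝ)⁻¹ * ((1 / 16) / M) := by field_simp
    _ ≤ (M : ℝ)⁻¹ * ((∫ u in (0 : ℝ)..1, |u ^ 2 - (a * u + d)|) / M) := by
      gcongr
      exact one_div_sixteen_le_integral_abs_sq_sub_affine a d

/-- The staircase function `F_M` is a continuous increasing function on `[0,1]` with
`F_M 0 = 0` and `F_M 1 = 1` (hence a valid CDF), and on each subinterval
`[i/M, (i+1)/M]` every affine function approximates it with `L¹` error at least
`1/(16M²)`. -/
theorem staircaseCDF_valid_and_adversarial (M : ℕ) (hM : 0 < M) :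
    ContinuousOn (staircaseCDF M) (Set.Icc 0 1)
    ∧ MonotoneOn (staircaseCDF M) (Set.Icc 0 1)
    ∧ staircaseCDF M 0 = 0
    ∧ staircaseCDF M 1 = 1
    ∧ ∀ i : ℕ, i < M → ∀ a b : ℝ,
        1 / (16 * (M : ℝ) ^ 2)
          ≤ ∫ x in ((i : ℝ) / M)..(((i : ℝ) + 1) / M),
              |staircaseCDF M x - (a * x + b)| := by
  refine ⟨(continuous_staircaseCDF M).continuousOn, (monotone_staircaseCDF M).monotoneOn _,
    staircaseCDF_zero M, staircaseCDF_one hM, fun i _ a b => ?_⟩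
  simpa using le_integral_abs_staircaseCDF_sub_affine hM i a b
end

section
/- Lower bound for K-piecewise linear approximation of the staircase CDF: with F_M as above and any function h that is affine on each interval of some partition of [0,1] into K intervals, if M ≥ K then ∫₀¹ |F_M(x) − h(x)| dx ≥ (M − K + 1)/(16M²). In particular, choosing M = 2(K−1) gives error at least 1/(64(K−1)). -/
/-!
On each cell `[i/M, (i+1)/M]` the staircase is a parabola of curvature `2M`, and integrating
against the weights `+1, -1, +1` on the quarters of the cell kills every affine function while
giving `1/(16M²)` on the parabola, so a single affine piece misses it by at least `1/(16M²)` in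
`L¹`. The cells are disjoint and `h` has only `K - 1` interior breakpoints, so at least
`M - K + 1` cells contain none, and on each of them `h` is one affine function.
-/

open MeasureTheory intervalIntegral

open Set
open scoped Finset

theorem integral_sub_integral_add_integral_le_integral_abs {f : ℝ → ℝ} (hf : Continuous f)
    {a b c d : ℝ} (hab : a ≤ b) (hbc : b ≤ c) (hcd : c ≤ d) :
    (∫ x in a..b, f x) - (∫ x in b..c, f x) + (∫ x in c..d, f x) ≤ ∫ x in a..d, |f x| := by
  have hi : ∀ u v : ℝ, IntervalIntegrable (fun x => |f x|) volume u v :=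
    fun u v => hf.abs.intervalIntegrable u v
  have h₁ : ∫ x in a..b, f x ≤ ∫ x in a..b, |f x| :=
    integral_mono_on hab (hf.intervalIntegrable _ _) (hi _ _) fun x _ => le_abs_self _
  have h₂ : -∫ x in b..c, f x ≤ ∫ x in b..c, |f x| := by
    rw [← intervalIntegral.integral_neg]
    exact integral_mono_on hbc (hf.neg.intervalIntegrable _ _) (hi _ _) fun x _ => neg_le_abs _
  have h₃ : ∫ x in c..d, f x ≤ ∫ x in c..d, |f x| :=
    integral_mono_on hcd (hf.intervalIntegrable _ _) (hi _ _) fun x _ => le_abs_self _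
  rw [← integral_add_adjacent_intervals (hi a b) (hi b d),
    ← integral_add_adjacent_intervals (hi b c) (hi c d)]
  linarith

theorem one_div_sixteen_mul_sq_le_integral_abs_sq_sub_affine {m : ℝ} (hm : 0 < m) (c a b : ℝ) :
    1 / (16 * m ^ 2) ≤ ∫ x in c / m..(c + 1) / m, |(m * x - c) ^ 2 / m - (a * x + b)| := by
  set f : ℝ → ℝ := fun x => (m * x - c) ^ 2 / m - (a * x + b)
  set P : ℝ → ℝ := fun x => (m * x - c) ^ 3 / (3 * m ^ 2) - (a * x ^ 2 / 2 + b * x)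
  have hP : ∀ x, HasDerivAt P (f x) x := fun x => by
    refine (((((hasDerivAt_id x).const_mul m).sub_const c).pow 3).div_const (3 * m ^ 2)).sub
      ((((hasDerivAt_pow 2 x).const_mul a).div_const 2).add
        ((hasDerivAt_id x).const_mul b)) |>.congr_deriv ?_
    simp only [f, id]
    field_simp
    ring
  have hf : Continuous f := by fun_prop
  have hint : ∀ u v, ∫ x in u..v, f x = P v - P u := fun u v =>
    integral_eq_sub_of_hasDerivAt (fun x _ => hP x) (hf.intervalIntegrable u v)
  calc 1 / (16 * m ^ 2)
      = (∫ x in c / m..(c + 1 / 4) / m, f x) - (∫ x in (c + 1 / 4) / m..(c + 3 / 4) / m, f x)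
          + ∫ x in (c + 3 / 4) / m..(c + 1) / m, f x := by
        simp only [hint, P]
        field_simp
        ring
    _ ≤ ∫ x in c / m..(c + 1) / m, |f x| :=
        integral_sub_integral_add_integral_le_integral_abs hf
          (by gcongr; norm_num) (by gcongr; norm_num) (by gcongr; norm_num)

theorem exists_mem_Ico_castSucc_succ {K : ℕ} (t : Fin (K + 1) → ℝ) {x : ℝ}
    (h₀ : t 0 ≤ x) (h₁ : x < t (Fin.last K)) :
    ∃ k : Fin K, x ∈ Ico (t k.castSucc) (t k.succ) := by
  induction K with
  | zero => exact absurd (h₀.trans_lt h₁) (lt_irrefl _)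
  | succ K ih =>
    by_cases hx : x < t (Fin.last K).castSucc
    · obtain ⟨k, hk⟩ := ih (t ∘ Fin.castSucc) h₀ hx
      exact ⟨k.castSucc, hk⟩
    · exact ⟨Fin.last K, not_lt.mp hx, by rwa [Fin.succ_last]⟩

theorem exists_Ico_subset_Ico_castSucc_succ {K : ℕ} (t : Fin (K + 1) → ℝ) {a b : ℝ}
    (ha : t 0 ≤ a) (hab : a < b) (hb : b ≤ t (Fin.last K))
    (hno : ∀ j ∈ Finset.Ioo 0 (Fin.last K), t j ∉ Ioo a b) :
    ∃ k : Fin K, Ico a b ⊆ Ico (t k.castSucc) (t k.succ) := by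
  obtain ⟨k, hka, hak⟩ := exists_mem_Ico_castSucc_succ t ha (hab.trans_le hb)
  refine ⟨k, Ico_subset_Ico hka ?_⟩
  by_cases hlast : k.succ = Fin.last K
  · rwa [hlast]
  · have hk : k.succ ∈ Finset.Ioo 0 (Fin.last K) :=
      Finset.mem_Ioo.mpr ⟨Fin.succ_pos k, lt_of_le_of_ne (Fin.le_last _) hlast⟩
    by_contra hbk
    exact hno _ hk ⟨hak, not_le.mp hbk⟩

theorem intervalIntegrable_of_eqOn_Ioo_continuous {E : Type*} [NormedAddCommGroup E]
    {K : ℕ} {t : Fin (K + 1) → ℝ} (ht : Monotone t) {f : ℝ → E}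
    (hf : ∀ k : Fin K, ∃ g : ℝ → E, Continuous g ∧ EqOn f g (Ioo (t k.castSucc) (t k.succ))) :
    IntervalIntegrable f volume (t 0) (t (Fin.last K)) := by
  induction K with
  | zero => exact IntervalIntegrable.refl
  | succ K ih =>
    refine (ih (t := t ∘ Fin.castSucc) (ht.comp Fin.strictMono_castSucc.monotone)
      fun k => hf k.castSucc).trans ?_
    obtain ⟨g, hg, hfg⟩ := hf (Fin.last K)
    rw [← Fin.succ_last]
    refine (hg.intervalIntegrable _ _).congr_uIoo ?_
    rw [Function.comp_apply, uIoo_of_le (ht (Fin.castSucc_le_succ _))]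
    exact hfg.symm

theorem card_filter_exists_mem_le_card {ι κ α : Type*} {s : Finset ι} {I : ι → Set α}
    (hI : (s : Set ι).PairwiseDisjoint I) (J : Finset κ) (p : κ → α)
    [DecidablePred fun i => ∃ j ∈ J, p j ∈ I i] :
    #{i ∈ s | ∃ j ∈ J, p j ∈ I i} ≤ #J := by
  classical
  calc #{i ∈ s | ∃ j ∈ J, p j ∈ I i}
      ≤ #(J.biUnion fun j => {i ∈ s | p j ∈ I i}) := by
        refine Finset.card_le_card fun i hi => ?_
        simp only [Finset.mem_filter, Finset.mem_biUnion] at hi ⊢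
        obtain ⟨hs, j, hj, hp⟩ := hi
        exact ⟨j, hj, hs, hp⟩
    _ ≤ ∑ j ∈ J, #{i ∈ s | p j ∈ I i} := Finset.card_biUnion_le
    _ ≤ ∑ _j ∈ J, 1 := by
        refine Finset.sum_le_sum fun j _ => Finset.card_le_one.mpr fun i hi i' hi' => ?_
        simp only [Finset.mem_filter] at hi hi'
        exact hI.elim hi.1 hi'.1 (not_disjoint_iff.mpr ⟨p j, hi.2, hi'.2⟩)
    _ = #J := by simp

theorem card_sub_card_mul_le_sum {ι : Type*} [DecidableEq ι] {s B : Finset ι} {f : ι → ℝ} {c : ℝ}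
    (hc : 0 ≤ c) (hf : ∀ i ∈ s, 0 ≤ f i) (hB : ∀ i ∈ s, i ∉ B → c ≤ f i) :
    (#s - #B) * c ≤ ∑ i ∈ s, f i := by
  have hcard : (#s : ℝ) ≤ #(s \ B) + #B := by exact_mod_cast Finset.card_le_card_sdiff_add_card
  calc (#s - #B) * c ≤ #(s \ B) • c := by
        rw [nsmul_eq_mul]
        gcongr
        linarith
    _ ≤ ∑ i ∈ s \ B, f i := Finset.card_nsmul_le_sum _ _ _ fun i hi =>
        hB i (Finset.mem_sdiff.mp hi).1 (Finset.mem_sdiff.mp hi).2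
    _ ≤ ∑ i ∈ s, f i :=
        Finset.sum_le_sum_of_subset_of_nonneg Finset.sdiff_subset fun i hi _ => hf i hi

theorem staircaseCDF_eqOn_Ico {M : ℕ} (hM : 0 < M) (i : ℕ) :
    EqOn (staircaseCDF M) (fun x => (M * x - i) ^ 2 / M + i / M)
      (Ico ((i : ℝ) / M) (((i + 1 : ℕ) : ℝ) / M)) := by
  intro x ⟨hix, hxi⟩
  have hM' : (0 : ℝ) < M := Nat.cast_pos.mpr hM
  have hfloor : ⌊(M : ℝ) * x⌋ = i := by
    rw [div_le_iff₀ hM'] at hix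
    rw [lt_div_iff₀ hM'] at hxi
    rw [Int.floor_eq_iff]
    push_cast at hxi ⊢
    constructor <;> linarith
  simp only [staircaseCDF, hfloor, Int.cast_natCast]

theorem intervalIntegrable_staircaseCDF {M : ℕ} (hM : 0 < M) (i : ℕ) :
    IntervalIntegrable (staircaseCDF M) volume ((i : ℝ) / M) (((i + 1 : ℕ) : ℝ) / M) := by
  refine (Continuous.intervalIntegrable (by fun_prop) _ _).congr_uIoo
    ((staircaseCDF_eqOn_Ico hM i).symm.mono ?_)
  rw [uIoo_of_le (by gcongr; simp)]
  exact Ioo_subset_Ico_self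

theorem one_div_sixteen_mul_sq_le_integral_abs_staircaseCDF_sub {M : ℕ} (hM : 0 < M) (i : ℕ)
    {h : ℝ → ℝ} {a b : ℝ}
    (hh : EqOn h (fun x => a * x + b) (Ioo ((i : ℝ) / M) (((i + 1 : ℕ) : ℝ) / M))) :
    1 / (16 * (M : ℝ) ^ 2) ≤
      ∫ x in (i : ℝ) / M..((i + 1 : ℕ) : ℝ) / M, |staircaseCDF M x - h x| := by
  rw [integral_congr_Ioo_of_le (g := fun x => |(M * x - i) ^ 2 / M - (a * x + (b - i / M))|)
    (by gcongr; simp)]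
  · convert one_div_sixteen_mul_sq_le_integral_abs_sq_sub_affine (Nat.cast_pos.mpr hM) (i : ℝ) a
      (b - i / M) using 2
    push_cast
    rfl
  · intro x hx
    dsimp only
    rw [staircaseCDF_eqOn_Ico hM i (Ioo_subset_Ico_self hx), hh hx]
    ring_nf

theorem integral_abs_staircaseCDF_sub_eq_sum {M : ℕ} (hM : 0 < M) {h : ℝ → ℝ}
    (hh : IntervalIntegrable h volume 0 1) :
    ∫ x in (0 : ℝ)..1, |staircaseCDF M x - h x| =
      ∑ i ∈ Finset.range M,
        ∫ x in (i : ℝ) / M..((i + 1 : ℕ) : ℝ) / M, |staircaseCDF M x - h x| := by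
  have hmem : ∀ i ≤ M, (i : ℝ) / M ∈ Icc 0 1 := fun i hi =>
    ⟨by positivity, div_le_one_of_le₀ (Nat.cast_le.mpr hi) (Nat.cast_nonneg M)⟩
  rw [sum_integral_adjacent_intervals (a := fun i : ℕ => (i : ℝ) / M) fun i hi =>
    ((intervalIntegrable_staircaseCDF hM i).sub (hh.mono_set (uIcc_subset_uIcc
      (Icc_subset_uIcc (hmem i hi.le)) (Icc_subset_uIcc (hmem _ hi))))).abs]
  simp [Nat.cast_ne_zero.mpr hM.ne']

theorem one_div_sixteen_mul_sq_le_integral_of_forall_notMem_Ioo {M K : ℕ} (hM : 0 < M) {i : ℕ}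
    (hi : i < M) {t : Fin (K + 1) → ℝ} (ht0 : t 0 = 0) (htK : t (Fin.last K) = 1)
    {h : ℝ → ℝ} {α β : Fin K → ℝ}
    (haff : ∀ k : Fin K, ∀ x ∈ Ico (t k.castSucc) (t k.succ), h x = α k * x + β k)
    (hno : ∀ j ∈ Finset.Ioo 0 (Fin.last K), t j ∉ Ioo ((i : ℝ) / M) (((i + 1 : ℕ) : ℝ) / M)) :
    1 / (16 * (M : ℝ) ^ 2) ≤
      ∫ x in (i : ℝ) / M..((i + 1 : ℕ) : ℝ) / M, |staircaseCDF M x - h x| := by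
  obtain ⟨k, hk⟩ := exists_Ico_subset_Ico_castSucc_succ t (by rw [ht0]; positivity)
    (by gcongr; simp) (by rw [htK]; exact div_le_one_of_le₀ (by exact_mod_cast hi) (by simp)) hno
  exact one_div_sixteen_mul_sq_le_integral_abs_staircaseCDF_sub hM i
    fun x hx => haff k x (hk (Ioo_subset_Ico_self hx))

theorem card_filter_exists_mem_Ioo_lt {M K : ℕ} (hK : 0 < K) (t : Fin (K + 1) → ℝ) :
    #((Finset.range M).filter fun i : ℕ =>
      ∃ j ∈ Finset.Ioo 0 (Fin.last K), t j ∈ Ioo ((i : ℝ) / M) (((i + 1 : ℕ) : ℝ) / M)) < K := by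
  have hmono : Monotone fun i : ℕ => (i : ℝ) / M := fun i j hij => by dsimp only; gcongr
  have := card_filter_exists_mem_le_card
    (hmono.pairwise_disjoint_on_Ioo_succ.set_pairwise (Finset.range M))
    (Finset.Ioo 0 (Fin.last K)) t
  simp only [Order.succ_eq_add_one, Fin.card_Ioo, Fin.val_last, Fin.val_zero] at this
  omega

/-- Lower bound for `K`-piecewise linear approximation of the staircase CDF: if `h` is
affine on each interval of some partition of `[0,1]` into `K` intervals and `M ≥ K`,
then `∫₀¹ |F_M − h| ≥ (M − K + 1)/(16M²)`. -/
theorem staircase_piecewise_linear_lower_bound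
    (M K : ℕ) (hK : 0 < K) (hMK : K ≤ M)
    (h : ℝ → ℝ)
    (t : Fin (K + 1) → ℝ) (ht : Monotone t)
    (ht0 : t 0 = 0) (htK : t (Fin.last K) = 1)
    (α β : Fin K → ℝ)
    (haff : ∀ k : Fin K, ∀ x ∈ Set.Ico (t k.castSucc) (t k.succ),
      h x = α k * x + β k) :
    ((M : ℝ) - K + 1) / (16 * (M : ℝ) ^ 2)
      ≤ ∫ x in (0 : ℝ)..1, |staircaseCDF M x - h x| := by
  have hM : 0 < M := hK.trans_le hMK
  have hh : IntervalIntegrable h volume 0 1 := by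
    rw [← ht0, ← htK]
    exact intervalIntegrable_of_eqOn_Ioo_continuous ht fun k =>
      ⟨_, by fun_prop, fun x hx => haff k x (Ioo_subset_Ico_self hx)⟩
  have hbad := card_filter_exists_mem_Ioo_lt (M := M) hK t
  set bad := (Finset.range M).filter fun i : ℕ =>
    ∃ j ∈ Finset.Ioo 0 (Fin.last K), t j ∈ Ioo ((i : ℝ) / M) (((i + 1 : ℕ) : ℝ) / M)
  rw [integral_abs_staircaseCDF_sub_eq_sum hM hh]
  calc ((M : ℝ) - K + 1) / (16 * (M : ℝ) ^ 2)
      ≤ (#(Finset.range M) - #bad) * (1 / (16 * (M : ℝ) ^ 2)) := by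
        rw [Finset.card_range, ← mul_one_div]
        gcongr
        have : (#bad : ℝ) + 1 ≤ K := by exact_mod_cast hbad
        linarith
    _ ≤ _ := card_sub_card_mul_le_sum (by positivity)
        (fun i _ => integral_nonneg (by gcongr; simp) fun _ _ => abs_nonneg _) fun i hi hib =>
          one_div_sixteen_mul_sq_le_integral_of_forall_notMem_Ioo hM (Finset.mem_range.mp hi)
            ht0 htK haff fun j hj hjt => hib (Finset.mem_filter.mpr ⟨hi, j, hj, hjt⟩)
end
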